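/- Let K_e, ρ_e, E be as above and let μ* > 0. Then the barrier-regularized functional J_{μ*}(δ,u) = 2 f^T u − ∑_e ρ_e E(δ_e) u^T K_e u + μ* ∑_e (log δ_e + log(1−δ_e)) is strictly concave on (0,1)^n × ℝ^m, provided K(δ) = ∑_e ρ_e E(δ_e) K_e is positive definite for all δ ∈ (0,1)^n. -/

import Mathlib

/-
Since `E(t)⁻¹ = (1 - t)/E₀ + t/E_D` is affine in `t`, each stiffness term
`ρₑ E(δₑ) uᵀKₑu` is the perspective `(s, u) ↦ uᵀKₑu / s` of a convex quadratic form composed with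
an affine map, hence jointly convex; so `J` is the sum of a concave function of `(δ, u)` and the
barrier, which is strictly concave in `δ`. Two points with different `δ` are separated strictly by
the barrier; two points with the same `δ` by the quadratic form `uᵀK(δ)u`, which is strictly convex
because `K(δ)` is positive definite.
-/

open Matrix Finset

section QuadraticForm

variable {ι : Type*} [Fintype ι] {K : Matrix ι ι ℝ}

theorem Matrix.IsHermitian.dotProduct_mulVec_comm (hK : K.IsHermitian) (u v : ι → ℝ) :
    v ⬝ᵥ K *ᵥ u = u ⬝ᵥ K *ᵥ v := by
  rw [dotProduct_mulVec, ← mulVec_transpose, ← conjTranspose_eq_transpose_of_trivial, hK.eq,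
    dotProduct_comm]

theorem Matrix.IsHermitian.quadForm_smul_add_smul (hK : K.IsHermitian) (a b : ℝ) (u v : ι → ℝ) :
    (a • u + b • v) ⬝ᵥ K *ᵥ (a • u + b • v)
      = a ^ 2 * (u ⬝ᵥ K *ᵥ u) + 2 * a * b * (u ⬝ᵥ K *ᵥ v) + b ^ 2 * (v ⬝ᵥ K *ᵥ v) := by
  simp only [mulVec_add, mulVec_smul, dotProduct_add, add_dotProduct, dotProduct_smul,
    smul_dotProduct, smul_eq_mul, hK.dotProduct_mulVec_comm u v]
  ring

theorem Matrix.PosDef.strictConvexOn_quadForm (hK : K.PosDef) :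
    StrictConvexOn ℝ Set.univ fun u : ι → ℝ => u ⬝ᵥ K *ᵥ u := by
  refine ⟨convex_univ, fun u _ v _ huv a b ha hb hab => ?_⟩
  have hpos : 0 < (u - v) ⬝ᵥ K *ᵥ (u - v) := by
    simpa using hK.dotProduct_mulVec_pos (sub_ne_zero.2 huv)
  have hgap : a * (u ⬝ᵥ K *ᵥ u) + b * (v ⬝ᵥ K *ᵥ v) - (a • u + b • v) ⬝ᵥ K *ᵥ (a • u + b • v)
      = a * b * ((u - v) ⬝ᵥ K *ᵥ (u - v)) := by
    rw [show u - v = (1 : ℝ) • u + (-1 : ℝ) • v by module,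
      hK.isHermitian.quadForm_smul_add_smul, hK.isHermitian.quadForm_smul_add_smul]
    linear_combination (-(a * (u ⬝ᵥ K *ᵥ u) + b * (v ⬝ᵥ K *ᵥ v))) * hab
  simp only [smul_eq_mul]
  linarith [mul_pos (mul_pos ha hb) hpos]

theorem Matrix.PosSemidef.convexOn_inv_mul_quadForm (hK : K.PosSemidef) :
    ConvexOn ℝ (Set.Ioi 0 ×ˢ Set.univ) fun p : ℝ × (ι → ℝ) => p.1⁻¹ * (p.2 ⬝ᵥ K *ᵥ p.2) := by
  refine ⟨(convex_Ioi 0).prod convex_univ, ?_⟩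
  rintro ⟨t, u⟩ ⟨ht, -⟩ ⟨s, v⟩ ⟨hs, -⟩ a b ha hb hab
  have hts : 0 < a * t + b * s := (convex_Ioi 0) ht hs ha hb hab
  have hQ : 0 ≤ (s • u + (-t) • v) ⬝ᵥ K *ᵥ (s • u + (-t) • v) := by
    simpa using hK.dotProduct_mulVec_nonneg (s • u + (-t) • v)
  simp only [Set.mem_Ioi] at ht hs
  simp only [Prod.smul_mk, Prod.mk_add_mk, smul_eq_mul, hK.isHermitian.quadForm_smul_add_smul]
    at hQ ⊢
  rw [← sub_nonneg]
  have key : a * (t⁻¹ * (u ⬝ᵥ K *ᵥ u)) + b * (s⁻¹ * (v ⬝ᵥ K *ᵥ v))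
      - (a * t + b * s)⁻¹ * (a ^ 2 * (u ⬝ᵥ K *ᵥ u) + 2 * a * b * (u ⬝ᵥ K *ᵥ v)
        + b ^ 2 * (v ⬝ᵥ K *ᵥ v))
      = a * b * (s ^ 2 * (u ⬝ᵥ K *ᵥ u) + 2 * s * -t * (u ⬝ᵥ K *ᵥ v)
        + (-t) ^ 2 * (v ⬝ᵥ K *ᵥ v)) / (t * s * (a * t + b * s)) := by
    field_simp
    ring
  rw [key]
  exact div_nonneg (mul_nonneg (mul_nonneg ha hb) hQ) (by positivity)

theorem Matrix.PosSemidef.convexOn_inv_affineMap_mul_quadForm {E : Type*} [AddCommGroup E]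
    [Module ℝ E] (hK : K.PosSemidef) (ℓ : E →ᵃ[ℝ] ℝ) :
    ConvexOn ℝ {p : E × (ι → ℝ) | 0 < ℓ p.1} fun p => (ℓ p.1)⁻¹ * (p.2 ⬝ᵥ K *ᵥ p.2) := by
  simpa [Set.preimage, Function.comp_def] using
    hK.convexOn_inv_mul_quadForm.comp_affineMap (ℓ.prodMap (AffineMap.id ℝ _))

end QuadraticForm

section Convexity

variable {E : Type*} [AddCommGroup E] [Module ℝ E] {s : Set E}

theorem ConvexOn.fun_sum {κ : Type*} {t : Finset κ} {f : κ → E → ℝ} (hs : Convex ℝ s)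
    (hf : ∀ i ∈ t, ConvexOn ℝ s (f i)) : ConvexOn ℝ s fun x => ∑ i ∈ t, f i x := by
  simp_rw [← Finset.sum_apply]
  exact Finset.sum_induction f (ConvexOn ℝ s) (fun _ _ => ConvexOn.add) (convexOn_const 0 hs) hf

theorem StrictConcaveOn.const_mul {f : E → ℝ} {c : ℝ} (hc : 0 < c) (hf : StrictConcaveOn ℝ s f) :
    StrictConcaveOn ℝ s fun x => c * f x := by
  refine ⟨hf.1, fun x hx y hy hxy a b ha hb hab => ?_⟩
  have h := mul_lt_mul_of_pos_left (hf.2 hx hy hxy ha hb hab) hc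
  simp only [smul_eq_mul] at h ⊢
  linarith

theorem StrictConcaveOn.sum_comp_eval {κ : Type*} [Fintype κ] {φ : E → ℝ}
    (hφ : StrictConcaveOn ℝ s φ) :
    StrictConcaveOn ℝ (Set.univ.pi fun _ : κ => s) fun x => ∑ i, φ (x i) := by
  refine ⟨convex_pi fun _ _ => hφ.1, fun x hx y hy hxy a b ha hb hab => ?_⟩
  obtain ⟨i, hi⟩ := Function.ne_iff.1 hxy
  simp only [Set.mem_univ_pi] at hx hy
  simp only [Pi.add_apply, Pi.smul_apply, smul_eq_mul, Finset.mul_sum, ← Finset.sum_add_distrib]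
  exact Finset.sum_lt_sum (fun j _ => hφ.concaveOn.2 (hx j) (hy j) ha.le hb.le hab)
    ⟨i, Finset.mem_univ i, hφ.2 (hx i) (hy i) hi ha hb hab⟩

theorem ConcaveOn.strictConcaveOn_add_comp_fst {F : Type*} [AddCommGroup F] [Module ℝ F]
    {t : Set F} {g : E × F → ℝ} {h : E → ℝ} (hg : ConcaveOn ℝ (s ×ˢ t) g)
    (hg_fiber : ∀ x ∈ s, StrictConcaveOn ℝ t fun y => g (x, y)) (hh : StrictConcaveOn ℝ s h) :
    StrictConcaveOn ℝ (s ×ˢ t) fun p => g p + h p.1 := by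
  refine ⟨hg.1, ?_⟩
  rintro ⟨x, y⟩ ⟨hx, hy⟩ ⟨x', y'⟩ ⟨hx', hy'⟩ hne a b ha hb hab
  have hg_le := hg.2 ⟨hx, hy⟩ ⟨hx', hy'⟩ ha.le hb.le hab
  simp only [Prod.smul_mk, Prod.mk_add_mk, smul_eq_mul] at hg_le ⊢
  obtain rfl | hxx := eq_or_ne x x'
  · have hyy : y ≠ y' := fun h => hne (by rw [h])
    have hg_lt := (hg_fiber x hx).2 hy hy' hyy ha hb hab
    simp only [smul_eq_mul] at hg_lt
    rw [Convex.combo_self hab x]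
    linear_combination hg_lt + h x * hab
  · have hh_lt := hh.2 hx hx' hxx ha hb hab
    simp only [smul_eq_mul] at hh_lt
    linarith

end Convexity

theorem strictConcaveOn_log_add_log_one_sub :
    StrictConcaveOn ℝ (Set.Ioo 0 1) fun t => Real.log t + Real.log (1 - t) := by
  refine (strictConcaveOn_log_Ioi.subset Set.Ioo_subset_Ioi_self (convex_Ioo 0 1)).add
    ⟨convex_Ioo 0 1, fun x hx y hy hxy a b ha hb hab => ?_⟩
  have h := strictConcaveOn_log_Ioi.2 (Set.mem_Ioi.2 (sub_pos.2 hx.2))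
    (Set.mem_Ioi.2 (sub_pos.2 hy.2)) (sub_right_injective.ne hxy) ha hb hab
  simp only [smul_eq_mul] at h ⊢
  convert h using 2
  linear_combination -hab

/-- Strict concavity of the barrier-regularized functional
`J_{μ*}(δ,u) = 2 fᵀu − ∑ₑ ρₑ E(δₑ) uᵀKₑu + μ* ∑ₑ (log δₑ + log(1−δₑ))`
on `(0,1)ⁿ × ℝᵐ`, provided `K(δ)` is positive definite there. -/
theorem stmt_8 (n m : ℕ) (E0 ED μ : ℝ) (hED : 0 < ED) (hlt : ED < E0)
    (hμ : 0 < μ)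
    (K : Fin n → Matrix (Fin m) (Fin m) ℝ) (hK : ∀ e, (K e).PosSemidef)
    (ρ : Fin n → ℝ) (hρ : ∀ e, 0 < ρ e)
    (f : Fin m → ℝ)
    (E : ℝ → ℝ) (hE : ∀ t, E t = ((1 - t) / E0 + t / ED)⁻¹)
    (hKpd : ∀ δ : Fin n → ℝ, (∀ e, δ e ∈ Set.Ioo (0:ℝ) 1) →
      (∑ e, (ρ e * E (δ e)) • K e).PosDef) :
    StrictConcaveOn ℝ (((Set.univ : Set (Fin n)).pi fun _ => Set.Ioo (0:ℝ) 1) ×ˢ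
        (Set.univ : Set (Fin m → ℝ)))
      (fun p : (Fin n → ℝ) × (Fin m → ℝ) =>
        2 * (f ⬝ᵥ p.2) - (∑ e, ρ e * E (p.1 e) * (p.2 ⬝ᵥ (K e).mulVec p.2))
          + μ * (∑ e, (Real.log (p.1 e) + Real.log (1 - p.1 e)))) := by
  set compliance : ℝ →ᵃ[ℝ] ℝ := AffineMap.lineMap E0⁻¹ ED⁻¹
  have hE_inv : ∀ t, E t = (compliance t)⁻¹ := fun t => by
    rw [hE, AffineMap.lineMap_apply_module, smul_eq_mul, smul_eq_mul, div_eq_mul_inv,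
      div_eq_mul_inv]
  have hcompliance_pos : ∀ t ∈ Set.Ioo (0 : ℝ) 1, 0 < compliance t := fun t ht =>
    (convex_Ioi 0).lineMap_mem (inv_pos.2 (hED.trans hlt)) (inv_pos.2 hED)
      (Set.Ioo_subset_Icc_self ht)
  set S := (Set.univ : Set (Fin n)).pi fun _ => Set.Ioo (0:ℝ) 1
  have hS : Convex ℝ S := convex_pi fun _ _ => convex_Ioo 0 1
  have hlin : ConcaveOn ℝ Set.univ fun u : Fin m → ℝ => 2 * (f ⬝ᵥ u) :=
    ((2 : ℝ) • dotProductEquiv ℝ (Fin m) f).concaveOn convex_univ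
  have hstiffness : ∀ e, ConvexOn ℝ (S ×ˢ Set.univ)
      fun p : (Fin n → ℝ) × (Fin m → ℝ) => ρ e * E (p.1 e) * (p.2 ⬝ᵥ K e *ᵥ p.2) := fun e =>
    (((hK e).convexOn_inv_affineMap_mul_quadForm (compliance.comp (AffineMap.proj e))).smul
      (hρ e).le).subset (fun p hp => hcompliance_pos _ (hp.1 e trivial)) (hS.prod convex_univ)
      |>.congr fun p _ => by simp [hE_inv, mul_assoc]
  have hconcave : ConcaveOn ℝ (S ×ˢ Set.univ) fun p : (Fin n → ℝ) × (Fin m → ℝ) =>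
      2 * (f ⬝ᵥ p.2) - ∑ e, ρ e * E (p.1 e) * (p.2 ⬝ᵥ K e *ᵥ p.2) :=
    ((hlin.comp_linearMap (LinearMap.snd ℝ _ _)).subset (Set.subset_univ _)
      (hS.prod convex_univ)).sub (ConvexOn.fun_sum (hS.prod convex_univ) fun e _ => hstiffness e)
  have hfiber : ∀ δ ∈ S, StrictConcaveOn ℝ Set.univ fun u : Fin m → ℝ =>
      2 * (f ⬝ᵥ u) - ∑ e, ρ e * E (δ e) * (u ⬝ᵥ K e *ᵥ u) := fun δ hδ =>
    (hlin.sub_strictConvexOn (hKpd δ fun e => hδ e trivial).strictConvexOn_quadForm).congr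
      fun u _ => by
        simp only [Pi.sub_apply, sum_mulVec, dotProduct_sum, smul_mulVec, dotProduct_smul,
          smul_eq_mul]
  exact hconcave.strictConcaveOn_add_comp_fst hfiber
    (strictConcaveOn_log_add_log_one_sub.sum_comp_eval.const_mul hμ)
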